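/- Let G be a finite dismantlable graph (all vertices looped), and let G' be the graph whose vertices are the nonempty cliques of G, with a loop at each vertex and with two cliques adjacent iff one contains the other. Then G' is dismantlable. -/

import Mathlib

structure RGraph (V : Type) where
  Adj : V → V → Prop
  symm : ∀ v w, Adj v w → Adj w v

def IsHom {V W : Type} (G : RGraph V) (H : RGraph W) (f : V → W) : Prop :=
  ∀ a b, G.Adj a b → H.Adj (f a) (f b)

def ExpAdj {VT VG : Type} (T : RGraph VT) (G : RGraph VG) (f g : VT → VG) : Prop :=
  ∀ t t', T.Adj t t' → G.Adj (f t) (g t')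

def expGraph {VT VG : Type} (T : RGraph VT) (G : RGraph VG) : RGraph (VT → VG) :=
  ⟨fun f g => ExpAdj T G f g, fun _ _ h t t' htt => G.symm _ _ (h t' t (T.symm _ _ htt))⟩

def prodG {VA VB : Type} (A : RGraph VA) (B : RGraph VB) : RGraph (VA × VB) :=
  ⟨fun p q => A.Adj p.1 q.1 ∧ B.Adj p.2 q.2,
   fun _ _ h => ⟨A.symm _ _ h.1, B.symm _ _ h.2⟩⟩

inductive Dismantles {V : Type} [DecidableEq V] (G : RGraph V) : Finset V → Prop
  | single (v : V) (hv : G.Adj v v) : Dismantles G {v}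
  | fold (s : Finset V) (v w : V) (hv : v ∈ s) (hw : w ∈ s) (hvw : v ≠ w)
      (hN : ∀ u ∈ s, G.Adj v u → G.Adj w u)
      (hrest : Dismantles G (s.erase v)) : Dismantles G s

def Dismantlable {V : Type} [DecidableEq V] (G : RGraph V) : Prop :=
  ∃ s : Finset V, (∀ v, v ∈ s) ∧ Dismantles G s

inductive WalkLen {V : Type} (A : V → V → Prop) : ℕ → V → V → Prop
  | zero (v : V) : WalkLen A 0 v v
  | succ {n : ℕ} {u v w : V} (h : A u v) (hw : WalkLen A n v w) : WalkLen A (n+1) u w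

def cliqueGraph {V : Type} (G : RGraph V) :
    RGraph {S : Finset V // S.Nonempty ∧ ∀ a ∈ S, ∀ b ∈ S, G.Adj a b} :=
  ⟨fun S T => S.1 ⊆ T.1 ∨ T.1 ⊆ S.1, fun _ _ h => h.symm⟩

/-- Fold away all vertices of `r`, in order of decreasing rank `ρ`. -/
lemma fold_many {V' : Type} [DecidableEq V'] (G : RGraph V') {α : Type} [LinearOrder α] :
    ∀ (n : ℕ) (s r : Finset V'), r.card = n → r ⊆ s →
    ∀ (f : ∀ S ∈ r, V') (ρ : V' → α),
    (∀ S (hS : S ∈ r), f S hS ∈ s ∧ f S hS ∉ r) →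
    (∀ S (hS : S ∈ r), ∀ T ∈ s, G.Adj S T → G.Adj (f S hS) T ∨ (T ∈ r ∧ ρ S < ρ T)) →
    Dismantles G (s \ r) → Dismantles G s := by
  intro n
  induction n with
  | zero =>
    intro s r hc hrs f ρ hf hcond hrest
    have hr : r = ∅ := Finset.card_eq_zero.mp hc
    simpa [hr] using hrest
  | succ n ih =>
    intro s r hc hrs f ρ hf hcond hrest
    have hne : r.Nonempty := Finset.card_pos.mp (by omega)
    obtain ⟨S, hS, hmax⟩ := Finset.exists_max_image r ρ hne
    have hfS := hf S hS
    have hSne : S ≠ f S hS := fun h => hfS.2 (h ▸ hS)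
    refine Dismantles.fold s S (f S hS) (hrs hS) hfS.1 hSne ?_ ?_
    · intro u hu hadj
      rcases hcond S hS u hu hadj with h | ⟨hur, hlt⟩
      · exact h
      · exact absurd (hmax u hur) (not_le_of_gt hlt)
    · have heq : s.erase S \ r.erase S = s \ r := by
        ext x
        simp only [Finset.mem_sdiff, Finset.mem_erase]
        constructor
        · rintro ⟨⟨hxS, hxs⟩, hxr⟩
          exact ⟨hxs, fun hx => hxr ⟨hxS, hx⟩⟩
        · rintro ⟨hxs, hxr⟩
          exact ⟨⟨fun h => hxr (h ▸ hS), hxs⟩, fun hx => hxr hx.2⟩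
      refine ih (s.erase S) (r.erase S) ?_ (Finset.erase_subset_erase S hrs)
        (fun T hT => f T (Finset.mem_of_mem_erase hT)) ρ ?_ ?_ (heq ▸ hrest)
      · rw [Finset.card_erase_of_mem hS, hc]; rfl
      · intro T hT
        have hT' := Finset.mem_of_mem_erase hT
        have h := hf T hT'
        refine ⟨Finset.mem_erase.mpr ⟨fun he => h.2 (by have he' : f T hT' = S := he; rw [he']; exact hS), h.1⟩,
          fun he => h.2 (Finset.mem_of_mem_erase he)⟩
      · intro T hT U hU hadj
        have hT' := Finset.mem_of_mem_erase hT
        rcases hcond T hT' U (Finset.mem_of_mem_erase hU) hadj with h | ⟨hUr, hlt⟩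
        · exact Or.inl h
        · exact Or.inr ⟨Finset.mem_erase.mpr ⟨(Finset.mem_erase.mp hU).1, hUr⟩, hlt⟩

noncomputable instance cvFintype {V : Type} [Fintype V] [DecidableEq V] (G : RGraph V) :
    Fintype {S : Finset V // S.Nonempty ∧ ∀ a ∈ S, ∀ b ∈ S, G.Adj a b} :=
  Fintype.ofInjective Subtype.val Subtype.val_injective

lemma cliques_dismantle {V : Type} [Fintype V] [DecidableEq V] (G : RGraph V)
    (hrefl : ∀ v, G.Adj v v) {s : Finset V} (hd : Dismantles G s) :
    Dismantles (cliqueGraph G)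
      (Finset.univ.filter (fun S : {S : Finset V // S.Nonempty ∧ ∀ a ∈ S, ∀ b ∈ S, G.Adj a b} =>
        S.1 ⊆ s)) := by
  induction hd with
  | single v hv =>
    have : (Finset.univ.filter (fun S : {S : Finset V // S.Nonempty ∧ ∀ a ∈ S, ∀ b ∈ S, G.Adj a b} =>
        S.1 ⊆ ({v} : Finset V)))
        = {⟨{v}, ⟨Finset.singleton_nonempty v, by
            intro a ha b hb
            rw [Finset.mem_singleton] at ha hb
            rw [ha, hb]; exact hv⟩⟩} := by
      ext S
      simp only [Finset.mem_filter, Finset.mem_univ, true_and, Finset.mem_singleton]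
      constructor
      · intro h
        apply Subtype.ext
        rcases Finset.subset_singleton_iff.mp h with h0 | h1
        · exact absurd h0 S.2.1.ne_empty
        · exact h1
      · intro h; rw [h]
    rw [this]
    exact Dismantles.single _ (Or.inl (subset_refl _))
  | fold s v w hv hw hvw hN hrest IH =>
    set CV := {S : Finset V // S.Nonempty ∧ ∀ a ∈ S, ∀ b ∈ S, G.Adj a b}
    set A : Finset CV := Finset.univ.filter (fun S => S.1 ⊆ s) with hA
    set r₁ : Finset CV := Finset.univ.filter (fun S => S.1 ⊆ s ∧ v ∈ S.1 ∧ w ∉ S.1) with hr₁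
    set r₂ : Finset CV := Finset.univ.filter (fun S => S.1 ⊆ s ∧ v ∈ S.1 ∧ w ∈ S.1) with hr₂
    -- key fact : w is adjacent to everything in a clique contained in s that contains v
    have hwadj : ∀ S : CV, S.1 ⊆ s → v ∈ S.1 → ∀ u ∈ S.1, G.Adj w u := by
      intro S hSs hvS u hu
      exact hN u (hSs hu) (S.2.2 v hvS u hu)
    -- Phase 1 : fold each clique containing v but not w onto its union with w
    have phase1 : Dismantles (cliqueGraph G) (A \ r₁) → Dismantles (cliqueGraph G) A := by
      intro h
      refine fold_many (cliqueGraph G) r₁.card A r₁ rfl ?_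
        (fun S hS => ⟨insert w S.1, ?_, ?_⟩) (fun S => S.1.card) ?_ ?_ h
      · intro S hS
        simp only [hr₁, hA, Finset.mem_filter] at hS ⊢
        exact ⟨Finset.mem_univ _, hS.2.1⟩
      · exact ⟨w, Finset.mem_insert_self w S.1⟩
      · -- insert w S.1 is a clique
        have hS' := Finset.mem_filter.mp hS
        obtain ⟨hSs, hvS, hwS⟩ := hS'.2
        intro a ha b hb
        rcases Finset.mem_insert.mp ha with ha | ha <;>
          rcases Finset.mem_insert.mp hb with hb | hb
        · rw [ha, hb]; exact hrefl w
        · rw [ha]; exact hwadj S hSs hvS b hb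
        · rw [hb]; exact G.symm _ _ (hwadj S hSs hvS a ha)
        · exact S.2.2 a ha b hb
      · intro S hS
        have hS' := (Finset.mem_filter.mp hS).2
        constructor
        · simp only [hA, Finset.mem_filter]
          exact ⟨Finset.mem_univ _, Finset.insert_subset hw hS'.1⟩
        · simp only [hr₁, Finset.mem_filter]
          rintro ⟨-, -, -, hcontra⟩
          exact hcontra (Finset.mem_insert_self w S.1)
      · intro S hS T hT hadj
        have hS' := (Finset.mem_filter.mp hS).2
        have hT' := (Finset.mem_filter.mp hT).2
        by_cases hTS : T.1 ⊆ S.1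
        · exact Or.inl (Or.inr (hTS.trans (Finset.subset_insert w S.1)))
        · have hST : S.1 ⊆ T.1 := hadj.resolve_right hTS
          by_cases hwT : w ∈ T.1
          · exact Or.inl (Or.inl (Finset.insert_subset hwT hST))
          · refine Or.inr ⟨?_, ?_⟩
            · simp only [hr₁, Finset.mem_filter]
              exact ⟨Finset.mem_univ _, hT', hST hS'.2.1, hwT⟩
            · exact Finset.card_lt_card ⟨hST, hTS⟩
    -- Phase 2 : fold each remaining clique containing v (hence also w) onto its erase of v
    have phase2 : Dismantles (cliqueGraph G) ((A \ r₁) \ r₂) →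
        Dismantles (cliqueGraph G) (A \ r₁) := by
      intro h
      have hr₂sub : r₂ ⊆ A \ r₁ := by
        intro S hS
        simp only [hr₂, hr₁, hA, Finset.mem_filter, Finset.mem_sdiff, Finset.mem_univ,
          true_and] at hS ⊢
        exact ⟨hS.1, fun hc => hc.2.2 hS.2.2⟩
      refine fold_many (cliqueGraph G) r₂.card (A \ r₁) r₂ rfl hr₂sub
        (fun S hS => ⟨S.1.erase v, ?_, ?_⟩) (fun S => OrderDual.toDual S.1.card) ?_ ?_ h
      · have hS' := (Finset.mem_filter.mp hS).2
        exact ⟨w, Finset.mem_erase.mpr ⟨(Ne.symm hvw), hS'.2.2⟩⟩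
      · intro a ha b hb
        exact S.2.2 a (Finset.mem_of_mem_erase ha) b (Finset.mem_of_mem_erase hb)
      · intro S hS
        have hS' := (Finset.mem_filter.mp hS).2
        constructor
        · simp only [Finset.mem_sdiff, hA, hr₁, Finset.mem_filter, Finset.mem_univ, true_and]
          refine ⟨(Finset.erase_subset v S.1).trans hS'.1, ?_⟩
          rintro ⟨-, hvmem, -⟩
          exact (Finset.mem_erase.mp hvmem).1 rfl
        · simp only [hr₂, Finset.mem_filter]
          rintro ⟨-, -, hvmem, -⟩
          exact (Finset.mem_erase.mp hvmem).1 rfl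
      · intro S hS T hT hadj
        have hS' := (Finset.mem_filter.mp hS).2
        have hT' := Finset.mem_sdiff.mp hT
        by_cases hST : S.1 ⊆ T.1
        · exact Or.inl (Or.inl ((Finset.erase_subset v S.1).trans hST))
        · have hTS : T.1 ⊆ S.1 := hadj.resolve_left hST
          by_cases hvT : v ∈ T.1
          · have hwT : w ∈ T.1 := by
              by_contra hwT
              refine hT'.2 ?_
              simp only [hr₁, Finset.mem_filter, Finset.mem_univ, true_and]
              refine ⟨?_, hvT, hwT⟩
              have := (Finset.mem_filter.mp hT'.1).2
              exact this
            refine Or.inr ⟨?_, ?_⟩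
            · simp only [hr₂, Finset.mem_filter, Finset.mem_univ, true_and]
              exact ⟨(Finset.mem_filter.mp hT'.1).2, hvT, hwT⟩
            · exact Finset.card_lt_card ⟨hTS, hST⟩
          · exact Or.inl (Or.inr (fun x hx =>
              Finset.mem_erase.mpr ⟨fun he => hvT (he ▸ hx), hTS hx⟩))
    -- Identify the remaining set with the cliques of s.erase v
    have heq : (A \ r₁) \ r₂ = Finset.univ.filter (fun S : CV => S.1 ⊆ s.erase v) := by
      ext S
      simp only [Finset.mem_sdiff, hA, hr₁, hr₂, Finset.mem_filter, Finset.mem_univ, true_and]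
      constructor
      · rintro ⟨⟨hSs, h1⟩, h2⟩
        intro x hx
        refine Finset.mem_erase.mpr ⟨?_, hSs hx⟩
        intro hxv
        subst hxv
        by_cases hwS : w ∈ S.1
        · exact h2 ⟨hSs, hx, hwS⟩
        · exact h1 ⟨hSs, hx, hwS⟩
      · intro h
        have hSs : S.1 ⊆ s := h.trans (Finset.erase_subset v s)
        have hvS : v ∉ S.1 := fun hx => (Finset.mem_erase.mp (h hx)).1 rfl
        exact ⟨⟨hSs, fun hc => hvS hc.2.1⟩, fun hc => hvS hc.2.1⟩
    exact phase1 (phase2 (heq ▸ IH))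

theorem stmt12 {V : Type} [Fintype V] [DecidableEq V] (G : RGraph V)
    (hrefl : ∀ v, G.Adj v v) (hG : Dismantlable G) :
    Dismantlable (cliqueGraph G) := by
  obtain ⟨s, hall, hd⟩ := hG
  refine ⟨Finset.univ.filter (fun S => S.1 ⊆ s), fun S => ?_, cliques_dismantle G hrefl hd⟩
  simp only [Finset.mem_filter, Finset.mem_univ, true_and]
  exact fun x _ => hall x
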